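/- Let f : ℍ → ℍ be three times continuously real-differentiable on an open set U ⊆ ℍ containing q₀. Then, as λ → 0, the remainder λ ↦ f(q₀ + λ) − f(q₀) − Σ_{η ∈ {1,i,j,k}} (∂f/∂q^η)(q₀)·λ^η − (1/2) Σ_{η,ζ ∈ {1,i,j,k}} (∂²f/∂q^ζ∂q^η)(q₀)·λ^ζ·λ^η is big-O of |λ|³, where λ^η := η λ η⁻¹ and (∂²f/∂q^ζ∂q^η)(q₀) is the left HR derivative with respect to ζ, taken at q₀, of the function q ↦ (∂f/∂q^η)(q). -/

import Mathlib

open Quaternion Filter Topology Asymptotics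

noncomputable section

/-- The imaginary unit `i` of the real quaternions. -/
def qI : ℍ[ℝ] := ⟨0, 1, 0, 0⟩
/-- The imaginary unit `j` of the real quaternions. -/
def qJ : ℍ[ℝ] := ⟨0, 0, 1, 0⟩
/-- The imaginary unit `k` of the real quaternions. -/
def qK : ℍ[ℝ] := ⟨0, 0, 0, 1⟩

/-- Quaternion rotation `p ↦ μ p μ⁻¹`. -/
def qRot (μ p : ℍ[ℝ]) : ℍ[ℝ] := μ * p * μ⁻¹

/-- The left GHR derivative `∂f/∂q^μ` at `q`. -/
def lD (f : ℍ[ℝ] → ℍ[ℝ]) (μ q : ℍ[ℝ]) : ℍ[ℝ] :=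
  (4 : ℍ[ℝ])⁻¹ * (fderiv ℝ f q 1 - fderiv ℝ f q qI * qRot μ qI
    - fderiv ℝ f q qJ * qRot μ qJ - fderiv ℝ f q qK * qRot μ qK)

/-- The left conjugate GHR derivative `∂f/∂q^{μ*}` at `q`. -/
def lDc (f : ℍ[ℝ] → ℍ[ℝ]) (μ q : ℍ[ℝ]) : ℍ[ℝ] :=
  (4 : ℍ[ℝ])⁻¹ * (fderiv ℝ f q 1 + fderiv ℝ f q qI * qRot μ qI
    + fderiv ℝ f q qJ * qRot μ qJ + fderiv ℝ f q qK * qRot μ qK)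

/-- The right GHR derivative `∂ᵣf/∂q^μ` at `q`. -/
def rD (f : ℍ[ℝ] → ℍ[ℝ]) (μ q : ℍ[ℝ]) : ℍ[ℝ] :=
  (4 : ℍ[ℝ])⁻¹ * (fderiv ℝ f q 1 - qRot μ qI * fderiv ℝ f q qI
    - qRot μ qJ * fderiv ℝ f q qJ - qRot μ qK * fderiv ℝ f q qK)

/-- The right conjugate GHR derivative `∂ᵣf/∂q^{μ*}` at `q`. -/
def rDc (f : ℍ[ℝ] → ℍ[ℝ]) (μ q : ℍ[ℝ]) : ℍ[ℝ] :=
  (4 : ℍ[ℝ])⁻¹ * (fderiv ℝ f q 1 + qRot μ qI * fderiv ℝ f q qI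
    + qRot μ qJ * fderiv ℝ f q qJ + qRot μ qK * fderiv ℝ f q qK)

/-! The left HR derivatives reconstruct the differential, `∑_η (∂f/∂q^η)(q) λ^η = Df(q) λ`,
because `∑_η η p η⁻¹ = 4 Re p` for `η ∈ {1, i, j, k}`. Applied once to `f` and once to each
`∂f/∂q^η`, this turns the two sums into `Df(q₀) λ` and `D²f(q₀)(λ, λ)`, so the claim is the real
second-order Taylor estimate. That estimate follows from the mean value inequality, used first
for the remainder of `Df` and then for the remainder of `f`, whose derivative it is. -/

theorem tendsto_const_add_nhds_zero {M : Type*} [AddZeroClass M] [TopologicalSpace M]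
    [ContinuousAdd M] (x : M) : Tendsto (x + ·) (𝓝 0) (𝓝 x) :=
  (continuous_const_add x).tendsto' 0 x (add_zero x)

section Taylor

variable {E F : Type*} [NormedAddCommGroup E] [NormedSpace ℝ E]
  [NormedAddCommGroup F] [NormedSpace ℝ F]

theorem isBigO_norm_pow_succ_of_hasFDerivAt {R : E → F} {R' : E → E →L[ℝ] F} {n : ℕ}
    (hR : ∀ᶠ h in 𝓝 0, HasFDerivAt R (R' h) h) (hR' : R' =O[𝓝 0] fun h => ‖h‖ ^ n)
    (hR0 : R 0 = 0) : R =O[𝓝 0] fun h => ‖h‖ ^ (n + 1) := by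
  obtain ⟨C, hC0, hC⟩ := hR'.exists_nonneg
  obtain ⟨ε, hε, hball⟩ := Metric.eventually_nhds_iff_ball.mp (hR.and hC.bound)
  refine isBigO_iff.2 ⟨C, ?_⟩
  filter_upwards [Metric.ball_mem_nhds 0 hε] with h hh
  have hsub : Metric.closedBall (0 : E) ‖h‖ ⊆ Metric.ball 0 ε :=
    Metric.closedBall_subset_ball (by simpa using hh)
  have hbound : ∀ y ∈ Metric.closedBall (0 : E) ‖h‖, ‖R' y‖ ≤ C * ‖h‖ ^ n := by
    intro y hy
    refine (hball y (hsub hy)).2.trans ?_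
    rw [norm_pow, norm_norm]
    gcongr
    simpa using hy
  have hmv := (convex_closedBall (0 : E) ‖h‖).norm_image_sub_le_of_norm_hasFDerivWithin_le
    (fun y hy => (hball y (hsub hy)).1.hasFDerivWithinAt) hbound
    (Metric.mem_closedBall_self (norm_nonneg h)) (mem_closedBall_zero_iff.2 le_rfl)
  simpa [hR0, pow_succ, mul_assoc] using hmv

theorem hasFDerivAt_apply_self_of_symm {B : E →L[ℝ] E →L[ℝ] F} (hB : ∀ v w, B v w = B w v)
    (h : E) : HasFDerivAt (fun y => B y y) ((2 : ℝ) • B h) h := by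
  refine (B.hasFDerivAt_of_bilinear (hasFDerivAt_id h) (hasFDerivAt_id h)).congr_fderiv ?_
  ext v
  simp [hB v h, two_smul]

theorem ContDiffAt.isBigO_taylor_one {f : E → F} {x : E} (hf : ContDiffAt ℝ 2 f x) :
    (fun h => f (x + h) - f x - fderiv ℝ f x h) =O[𝓝 0] fun h => ‖h‖ ^ 2 := by
  refine isBigO_norm_pow_succ_of_hasFDerivAt
    (R' := fun h => fderiv ℝ f (x + h) - fderiv ℝ f x) ?_ ?_ (by simp)
  · filter_upwards [(tendsto_const_add_nhds_zero x).eventually (hf.eventually (by simp))]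
      with h hh
    have hfh := (hh.differentiableAt (by norm_num)).hasFDerivAt
    exact (((hasFDerivAt_comp_add_left x).2 hfh).sub_const _).sub (fderiv ℝ f x).hasFDerivAt
  · have hf' : DifferentiableAt ℝ (fderiv ℝ f) x :=
      (hf.fderiv_right (m := 1) (by norm_num)).differentiableAt one_ne_zero
    simpa [Function.comp_def] using
      (hf'.isBigO_sub.comp_tendsto (tendsto_const_add_nhds_zero x)).norm_right

theorem ContDiffAt.isBigO_taylor_two {f : E → F} {x : E} (hf : ContDiffAt ℝ 3 f x) :
    (fun h => f (x + h) - f x - fderiv ℝ f x h - (2⁻¹ : ℝ) • fderiv ℝ (fderiv ℝ f) x h h)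
      =O[𝓝 0] fun h => ‖h‖ ^ 3 := by
  have hDf := (hf.fderiv_right (m := 2) (by norm_num)).isBigO_taylor_one
  refine isBigO_norm_pow_succ_of_hasFDerivAt ?_ hDf (by simp)
  filter_upwards [(tendsto_const_add_nhds_zero x).eventually (hf.eventually (by simp))] with h hh
  have hfh := (hasFDerivAt_comp_add_left x).2 (hh.differentiableAt (by norm_num)).hasFDerivAt
  have hquad := hasFDerivAt_apply_self_of_symm (hf.isSymmSndFDerivAt (by norm_num)) h
  convert ((hfh.sub_const (f x)).sub (fderiv ℝ f x).hasFDerivAt).sub (hquad.const_smul (2⁻¹ : ℝ))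
    using 1
  · funext y
    simp
  · rw [smul_smul]
    norm_num

end Taylor

section Quaternion

@[simp] theorem re_qI : qI.re = 0 := rfl
@[simp] theorem imI_qI : qI.imI = 1 := rfl
@[simp] theorem imJ_qI : qI.imJ = 0 := rfl
@[simp] theorem imK_qI : qI.imK = 0 := rfl
@[simp] theorem re_qJ : qJ.re = 0 := rfl
@[simp] theorem imI_qJ : qJ.imI = 0 := rfl
@[simp] theorem imJ_qJ : qJ.imJ = 1 := rfl
@[simp] theorem imK_qJ : qJ.imK = 0 := rfl
@[simp] theorem re_qK : qK.re = 0 := rfl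
@[simp] theorem imI_qK : qK.imI = 0 := rfl
@[simp] theorem imJ_qK : qK.imJ = 0 := rfl
@[simp] theorem imK_qK : qK.imK = 1 := rfl

attribute [local simp] Quaternion.re_mul Quaternion.imI_mul Quaternion.imJ_mul Quaternion.imK_mul

theorem qI_ne_zero : qI ≠ 0 := fun h => by simpa using congrArg QuaternionAlgebra.imI h
theorem qJ_ne_zero : qJ ≠ 0 := fun h => by simpa using congrArg QuaternionAlgebra.imJ h
theorem qK_ne_zero : qK ≠ 0 := fun h => by simpa using congrArg QuaternionAlgebra.imK h

theorem qI_inv : qI⁻¹ = -qI := inv_eq_of_mul_eq_one_right <| by ext <;> simp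
theorem qJ_inv : qJ⁻¹ = -qJ := inv_eq_of_mul_eq_one_right <| by ext <;> simp
theorem qK_inv : qK⁻¹ = -qK := inv_eq_of_mul_eq_one_right <| by ext <;> simp

theorem re_qI_mul (p : ℍ[ℝ]) : (qI * p).re = -p.imI := by simp
theorem re_qJ_mul (p : ℍ[ℝ]) : (qJ * p).re = -p.imJ := by simp
theorem re_qK_mul (p : ℍ[ℝ]) : (qK * p).re = -p.imK := by simp

theorem re_smul_one_add_imI_smul_qI_add (p : ℍ[ℝ]) :
    p.re • 1 + p.imI • qI + p.imJ • qJ + p.imK • qK = p := by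
  ext <;> simp

theorem qRot_mul {μ : ℍ[ℝ]} (hμ : μ ≠ 0) (p p' : ℍ[ℝ]) :
    qRot μ (p * p') = qRot μ p * qRot μ p' := by
  simp only [qRot, mul_assoc, inv_mul_cancel_left₀ hμ]

theorem sum_qRot (p : ℍ[ℝ]) :
    ([1, qI, qJ, qK].map fun η => qRot η p).sum = ((4 * p.re : ℝ) : ℍ[ℝ]) := by
  ext <;> simp [qRot, qI_inv, qJ_inv, qK_inv]
  ring

theorem inv_ofNat_mul_eq_smul (n : ℕ) [n.AtLeastTwo] (x : ℍ[ℝ]) :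
    (ofNat(n) : ℍ[ℝ])⁻¹ * x = (ofNat(n) : ℝ)⁻¹ • x := by
  rw [← Quaternion.coe_mul_eq_smul, Quaternion.coe_inv]
  rfl

end Quaternion

/-- `lD f μ q = lDOfFDeriv μ (fderiv ℝ f q)` holds by `rfl`; as a continuous linear map in the
derivative, it makes `lD f μ` differentiable wherever `fderiv ℝ f` is. -/
def lDOfFDeriv (μ : ℍ[ℝ]) : (ℍ[ℝ] →L[ℝ] ℍ[ℝ]) →L[ℝ] ℍ[ℝ] :=
  open ContinuousLinearMap in
  mul ℝ ℍ[ℝ] (4 : ℍ[ℝ])⁻¹ ∘L (apply ℝ ℍ[ℝ] 1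
    - (mul ℝ ℍ[ℝ]).flip (qRot μ qI) ∘L apply ℝ ℍ[ℝ] qI
    - (mul ℝ ℍ[ℝ]).flip (qRot μ qJ) ∘L apply ℝ ℍ[ℝ] qJ
    - (mul ℝ ℍ[ℝ]).flip (qRot μ qK) ∘L apply ℝ ℍ[ℝ] qK)

theorem lDOfFDeriv_apply (μ : ℍ[ℝ]) (T : ℍ[ℝ] →L[ℝ] ℍ[ℝ]) : lDOfFDeriv μ T =
    (4 : ℍ[ℝ])⁻¹ * (T 1 - T qI * qRot μ qI - T qJ * qRot μ qJ - T qK * qRot μ qK) := rfl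

theorem sum_lDOfFDeriv_mul_qRot (T : ℍ[ℝ] →L[ℝ] ℍ[ℝ]) (l : ℍ[ℝ]) :
    ([1, qI, qJ, qK].map fun η => lDOfFDeriv η T * qRot η l).sum = T l := by
  have hsum : ([1, qI, qJ, qK].map fun η => lDOfFDeriv η T * qRot η l).sum
      = (4 : ℍ[ℝ])⁻¹ * (T 1 * ([1, qI, qJ, qK].map fun η => qRot η l).sum
        - T qI * ([1, qI, qJ, qK].map fun η => qRot η (qI * l)).sum
        - T qJ * ([1, qI, qJ, qK].map fun η => qRot η (qJ * l)).sum
        - T qK * ([1, qI, qJ, qK].map fun η => qRot η (qK * l)).sum) := by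
    simp only [List.map_cons, List.map_nil, List.sum_cons, List.sum_nil, add_zero,
      lDOfFDeriv_apply, qRot_mul one_ne_zero, qRot_mul qI_ne_zero, qRot_mul qJ_ne_zero,
      qRot_mul qK_ne_zero]
    noncomm_ring
  rw [hsum, sum_qRot, sum_qRot, sum_qRot, sum_qRot, re_qI_mul, re_qJ_mul, re_qK_mul]
  conv_rhs => rw [← re_smul_one_add_imI_smul_qI_add l]
  simp only [map_add, map_smul, Quaternion.mul_coe_eq_smul, inv_ofNat_mul_eq_smul]
  module

theorem sum_lD_mul_qRot (f : ℍ[ℝ] → ℍ[ℝ]) (q l : ℍ[ℝ]) :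
    ([1, qI, qJ, qK].map fun η => lD f η q * qRot η l).sum = fderiv ℝ f q l :=
  sum_lDOfFDeriv_mul_qRot _ l

theorem hasFDerivAt_lD {f : ℍ[ℝ] → ℍ[ℝ]} {f'' : ℍ[ℝ] →L[ℝ] ℍ[ℝ] →L[ℝ] ℍ[ℝ]} {q : ℍ[ℝ]}
    (μ : ℍ[ℝ]) (hf : HasFDerivAt (fderiv ℝ f) f'' q) :
    HasFDerivAt (lD f μ) ((lDOfFDeriv μ).comp f'') q :=
  HasFDerivAt.comp (𝕜 := ℝ) (F := ℍ[ℝ] →L[ℝ] ℍ[ℝ]) q (lDOfFDeriv μ).hasFDerivAt hf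

theorem sum_sum_lD_lD_mul_qRot {f : ℍ[ℝ] → ℍ[ℝ]} {q : ℍ[ℝ]}
    (hf : DifferentiableAt ℝ (fderiv ℝ f) q) (l : ℍ[ℝ]) :
    ([1, qI, qJ, qK].map fun η =>
      ([1, qI, qJ, qK].map fun ζ => lD (fun p => lD f η p) ζ q * qRot ζ l * qRot η l).sum).sum
      = fderiv ℝ (fderiv ℝ f) q l l := by
  have hinner : ∀ η, ([1, qI, qJ, qK].map fun ζ =>
      lD (fun p => lD f η p) ζ q * qRot ζ l * qRot η l).sum
      = lDOfFDeriv η (fderiv ℝ (fderiv ℝ f) q l) * qRot η l := by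
    intro η
    rw [List.sum_map_mul_right, sum_lD_mul_qRot, (hasFDerivAt_lD η hf.hasFDerivAt).fderiv]
    rfl
  simp only [hinner]
  exact sum_lDOfFDeriv_mul_qRot _ l

theorem taylor_theorem_left_form
    (f : ℍ[ℝ] → ℍ[ℝ]) (U : Set ℍ[ℝ]) (hU : IsOpen U) (q₀ : ℍ[ℝ]) (hq₀ : q₀ ∈ U)
    (hf : ContDiffOn ℝ 3 f U) :
    (fun l : ℍ[ℝ] => f (q₀ + l) - f q₀
        - (([1, qI, qJ, qK].map fun η => lD f η q₀ * qRot η l).sum)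
        - (2 : ℍ[ℝ])⁻¹ * (([1, qI, qJ, qK].map fun η =>
            (([1, qI, qJ, qK].map fun ζ =>
              lD (fun p => lD f η p) ζ q₀ * qRot ζ l * qRot η l).sum)).sum))
      =O[𝓝 0] fun l : ℍ[ℝ] => ‖l‖ ^ 3 := by
  have hf₀ : ContDiffAt ℝ 3 f q₀ := hf.contDiffAt (hU.mem_nhds hq₀)
  have hDf₀ : DifferentiableAt ℝ (fderiv ℝ f) q₀ :=
    (hf₀.fderiv_right (m := 2) (by norm_num)).differentiableAt (by norm_num)
  simp only [sum_lD_mul_qRot, sum_sum_lD_lD_mul_qRot hDf₀, inv_ofNat_mul_eq_smul]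
  exact hf₀.isBigO_taylor_two

end
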